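/- arXiv:1911.04552 — 2 statements merged into one kernel-verified Lean document; each statement's English description precedes it below -/
import Mathlib

section
/- Let A = ⊕_{i≥0} A_i be a graded-commutative algebra whose degree-0 part A_0 is a commutative noetherian ring. Then A is noetherian if and only if A is finitely generated as an algebra over A_0. -/
open DirectSum
section Aux
variable {A : Type*} [Ring A] (𝒜 : ℕ → AddSubgroup A) [GradedRing 𝒜]

lemma aux_central (hgc : ∀ (i j : ℕ), ∀ a ∈ 𝒜 i, ∀ b ∈ 𝒜 j, a * b = (-1 : A) ^ (i * j) * (b * a))
    {i : ℕ} (hi : Even i) {a : A} (ha : a ∈ 𝒜 i) (b : A) : a * b = b * a := by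
  classical
  conv_lhs => rw [← DirectSum.sum_support_decompose 𝒜 b]
  conv_rhs => rw [← DirectSum.sum_support_decompose 𝒜 b]
  rw [Finset.mul_sum, Finset.sum_mul]
  refine Finset.sum_congr rfl fun j _ => ?_
  rw [hgc i j a ha _ (SetLike.coe_mem _), (hi.mul_right j).neg_one_pow, one_mul]

lemma aux_anticomm (hgc : ∀ (i j : ℕ), ∀ a ∈ 𝒜 i, ∀ b ∈ 𝒜 j, a * b = (-1 : A) ^ (i * j) * (b * a))
    {i j : ℕ} (hi : Odd i) (hj : Odd j) {a b : A} (ha : a ∈ 𝒜 i) (hb : b ∈ 𝒜 j) :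
    a * b = -(b * a) := by
  rw [hgc i j a ha b hb, (hi.mul hj).neg_one_pow, neg_one_mul]

lemma aux_forward (hN : IsNoetherianRing A) :
    ∃ s : Finset A, Subring.closure ((𝒜 0 : Set A) ∪ (s : Set A)) = ⊤ := by
  classical
  set SP : Set A := ⋃ i, (𝒜 (i + 1) : Set A) with hSP
  set I : Ideal A := Ideal.span SP with hI
  obtain ⟨T0, hT0⟩ := (isNoetherian_def.mp hN) I
  -- for each generator, a finite subset of SP spanning it
  have hmem : ∀ g ∈ T0, ∃ F : Finset A, ↑F ⊆ SP ∧ (g : A) ∈ Submodule.span A (F : Set A) := by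
    intro g hg
    have hgI : g ∈ I := hT0 ▸ Submodule.subset_span hg
    exact Submodule.mem_span_finite_of_mem_span hgI
  choose F hFsub hFmem using hmem
  set T : Finset A := T0.attach.biUnion (fun g => F g g.2) with hT
  have hTsub : (T : Set A) ⊆ SP := by
    intro x hx
    simp only [hT, Finset.coe_biUnion, Set.mem_iUnion, Finset.mem_coe] at hx
    obtain ⟨g, _, hx⟩ := hx
    exact hFsub g g.2 hx
  have hspanT : Submodule.span A (T : Set A) = I := by
    apply le_antisymm
    · rw [Submodule.span_le, hI]
      exact hTsub.trans Ideal.subset_span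
    · rw [← hT0, Submodule.span_le]
      intro g hg
      refine Submodule.span_mono ?_ (hFmem g hg)
      intro x hx
      simp only [hT, Finset.coe_biUnion, Set.mem_iUnion, Finset.mem_coe]
      exact ⟨⟨g, hg⟩, Finset.mem_attach _ _, hx⟩
  refine ⟨T, ?_⟩
  set R : Subring A := Subring.closure ((𝒜 0 : Set A) ∪ (T : Set A)) with hR
  have key : ∀ n, ∀ a ∈ 𝒜 n, a ∈ R := by
    intro n
    induction n using Nat.strong_induction_on with
    | _ n ih =>
      intro a ha
      match n, ih with
      | 0, _ => exact Subring.subset_closure (Or.inl ha)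
      | (m+1), ih =>
        have haI : a ∈ Submodule.span A (T : Set A) := by
          rw [hspanT, hI]
          exact Ideal.subset_span (Set.mem_iUnion.mpr ⟨m, ha⟩)
        obtain ⟨f, -, hf⟩ := Submodule.mem_span_finset.mp haI
        have : a = ∑ t ∈ T, (GradedRing.proj 𝒜 (m+1)) (f t * t) := by
          calc a = (GradedRing.proj 𝒜 (m+1)) a := (DirectSum.decompose_of_mem_same 𝒜 ha).symm
          _ = ∑ t ∈ T, (GradedRing.proj 𝒜 (m+1)) (f t * t) := by
              rw [← map_sum]; congr 1; rw [← hf]; rfl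
        rw [this]
        refine Subring.sum_mem _ fun t ht => ?_
        obtain ⟨d, hd⟩ : ∃ d, t ∈ 𝒜 (d + 1) := by
          have := hTsub ht; rw [hSP] at this; simpa using this
        by_cases hle : d + 1 ≤ m + 1
        · have : (GradedRing.proj 𝒜 (m+1)) (f t * t)
              = (GradedRing.proj 𝒜 (m + 1 - (d+1))) (f t) * t := by
            exact DirectSum.coe_decompose_mul_of_right_mem_of_le 𝒜 hd hle
          rw [this]
          refine Subring.mul_mem _ ?_ (Subring.subset_closure (Or.inr ht))
          exact ih (m + 1 - (d+1)) (by omega) _ (SetLike.coe_mem _)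
        · have : (GradedRing.proj 𝒜 (m+1)) (f t * t) = 0 :=
            DirectSum.coe_decompose_mul_of_right_mem_of_not_le 𝒜 hd hle
          rw [this]; exact Subring.zero_mem _
  rw [eq_top_iff]
  intro a _
  rw [← DirectSum.sum_support_decompose 𝒜 a]
  exact Subring.sum_mem _ fun i _ => key i _ (SetLike.coe_mem _)
lemma aux_backward
    (hgc : ∀ (i j : ℕ), ∀ a ∈ 𝒜 i, ∀ b ∈ 𝒜 j, a * b = (-1 : A) ^ (i * j) * (b * a))
    (h0comm : ∀ a b : 𝒜 0, a * b = b * a)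
    (h0noeth : IsNoetherianRing (𝒜 0))
    (hfg : ∃ s : Finset A, Subring.closure ((𝒜 0 : Set A) ∪ (s : Set A)) = ⊤) :
    IsNoetherianRing A := by
  classical
  obtain ⟨s, hs⟩ := hfg
  -- homogeneous components of the generators, tagged with their degrees
  set comps : Finset (A × ℕ) :=
    s.biUnion (fun a => (DFinsupp.support (decompose 𝒜 a)).image
      (fun i => ((decompose 𝒜 a i : A), i))) with hcomps
  have hcompsmem : ∀ p ∈ comps, p.1 ∈ 𝒜 p.2 := by
    intro p hp
    simp only [hcomps, Finset.mem_biUnion, Finset.mem_image] at hp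
    obtain ⟨a, _, i, _, rfl⟩ := hp
    exact SetLike.coe_mem _
  set E : Finset A := (comps.filter (fun p => Even p.2)).image Prod.fst
      ∪ (comps.filter (fun p => ¬ Even p.2)).image (fun p => p.1 * p.1) with hE
  set O : Finset A := (comps.filter (fun p => ¬ Even p.2)).image Prod.fst with hO
  have hodd : ∀ x ∈ O, ∃ i, Odd i ∧ x ∈ 𝒜 i := by
    intro x hx
    simp only [hO, Finset.mem_image, Finset.mem_filter] at hx
    obtain ⟨p, ⟨hp, hpe⟩, rfl⟩ := hx
    exact ⟨p.2, Nat.not_even_iff_odd.mp hpe, hcompsmem p hp⟩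
  have hsqE : ∀ x ∈ O, x * x ∈ E := by
    intro x hx
    simp only [hO, Finset.mem_image] at hx
    obtain ⟨p, hp, rfl⟩ := hx
    simp only [hE, Finset.mem_union, Finset.mem_image]
    exact Or.inr ⟨p, hp, rfl⟩
  have hEcentral : ∀ x ∈ E, ∀ b : A, x * b = b * x := by
    intro x hx b
    simp only [hE, Finset.mem_union, Finset.mem_image, Finset.mem_filter] at hx
    rcases hx with ⟨p, ⟨hp, hpe⟩, rfl⟩ | ⟨p, ⟨hp, hpe⟩, rfl⟩
    · exact aux_central 𝒜 hgc hpe (hcompsmem p hp) b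
    · exact aux_central 𝒜 hgc (⟨p.2, rfl⟩ : Even (p.2 + p.2))
        (SetLike.mul_mem_graded (hcompsmem p hp) (hcompsmem p hp)) b
  -- algebra structures
  letI : CommRing (𝒜 0) := { (inferInstance : Ring (𝒜 0)) with mul_comm := h0comm }
  have h0central : ∀ (r : 𝒜 0) (x : A), (r : A) * x = x * (r : A) := fun r x =>
    aux_central 𝒜 hgc (Even.zero) r.2 x
  letI : Algebra (𝒜 0) A := RingHom.toAlgebra'
    { toFun := Subtype.val, map_one' := rfl, map_mul' := fun _ _ => rfl,
      map_zero' := rfl, map_add' := fun _ _ => rfl }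
    (fun r x => h0central r x)
  set B' : Subalgebra (𝒜 0) A := Algebra.adjoin (𝒜 0) (E : Set A) with hB'
  have hB'central : ∀ b ∈ B', ∀ x : A, b * x = x * b := by
    intro b hb x
    induction hb using Algebra.adjoin_induction with
    | mem y hy => exact hEcentral y hy x
    | algebraMap r => exact h0central r x
    | add u v _ _ hu hv => rw [add_mul, mul_add, hu, hv]
    | mul u v _ _ hu hv => rw [mul_assoc, hv, ← mul_assoc, hu, mul_assoc]
  letI : CommRing B' := { (inferInstance : Ring B') with
    mul_comm := fun a b => Subtype.ext (show (a:A)*(b:A) = (b:A)*(a:A) from hB'central _ a.2 _) }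
  haveI : Algebra.FiniteType (𝒜 0) B' := (Subalgebra.fg_iff_finiteType B').mp ⟨E, rfl⟩
  haveI hB'noeth : IsNoetherianRing B' := Algebra.FiniteType.isNoetherianRing (𝒜 0) B'
  letI : Algebra B' A := RingHom.toAlgebra' (Subalgebra.val B').toRingHom
    (fun c x => hB'central c c.2 x)
  have hsmul : ∀ (c : B') (x : A), c • x = (c : A) * x := fun c x => rfl
  set L : List A := O.toList with hL
  have hLO : ∀ y ∈ L, y ∈ O := fun y hy => (Finset.mem_toList).mp hy
  have hOL : ∀ y ∈ O, y ∈ L := fun y hy => (Finset.mem_toList).mpr hy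
  -- the core lemma
  have hcore : ∀ (K : List A), (∀ y ∈ K, y ∈ O) → ∀ x ∈ K, ∀ l : List A, l.Sublist K →
      x * l.prod ∈ Submodule.span B' {z | ∃ m : List A, m.Sublist K ∧ z = m.prod} := by
    intro K
    induction K with
    | nil => intro _ x hx; exact absurd hx List.not_mem_nil
    | cons a K ih =>
      intro hmem x hx l hl
      have hmono : {z | ∃ m : List A, m.Sublist K ∧ z = m.prod} ⊆
          {z | ∃ m : List A, m.Sublist (a :: K) ∧ z = m.prod} := by
        rintro z ⟨m, hm, rfl⟩; exact ⟨m, hm.cons a, rfl⟩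
      have hamul : ∀ u ∈ Submodule.span B' {z | ∃ m : List A, m.Sublist K ∧ z = m.prod},
          a * u ∈ Submodule.span B' {z | ∃ m : List A, m.Sublist (a :: K) ∧ z = m.prod} := by
        intro u hu
        induction hu using Submodule.span_induction with
        | mem z hz =>
          obtain ⟨m, hm, rfl⟩ := hz
          exact Submodule.subset_span ⟨a :: m, List.cons_sublist_cons.mpr hm, (List.prod_cons).symm⟩
        | zero => rw [mul_zero]; exact Submodule.zero_mem _
        | add u v _ _ hu hv => rw [mul_add]; exact Submodule.add_mem _ hu hv
        | smul c u _ hu =>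
          have : a * (c • u) = c • (a * u) := by
            rw [hsmul, hsmul, ← mul_assoc, ← hB'central (c : A) c.2 a, mul_assoc]
          rw [this]; exact Submodule.smul_mem _ _ hu
      rcases List.sublist_cons_iff.mp hl with hlK | ⟨t, rfl, htK⟩
      · rcases List.mem_cons.mp hx with rfl | hxK
        · exact Submodule.subset_span ⟨x :: l, List.cons_sublist_cons.mpr hlK,
            (List.prod_cons).symm⟩
        · exact Submodule.span_mono hmono
            (ih (fun y hy => hmem y (List.mem_cons_of_mem a hy)) x hxK l hlK)
      · rcases List.mem_cons.mp hx with rfl | hxK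
        · -- x = a : use the square
          have hsq : x * x ∈ B' := Algebra.subset_adjoin (hsqE x (hmem x List.mem_cons_self))
          have : x * (x :: t).prod = (⟨x * x, hsq⟩ : B') • t.prod := by
            rw [hsmul, List.prod_cons, ← mul_assoc]
          rw [this]
          exact Submodule.smul_mem _ _ (Submodule.subset_span ⟨t, htK.cons x, rfl⟩)
        · -- x ∈ K, anticommute past a
          have ha : a ∈ O := hmem a List.mem_cons_self
          have hx' : x ∈ O := hmem x (List.mem_cons_of_mem a hxK)
          obtain ⟨i, hi, hxi⟩ := hodd x hx'
          obtain ⟨j, hj, haj⟩ := hodd a ha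
          have h1 : x * (a :: t).prod = -(a * (x * t.prod)) := by
            rw [List.prod_cons, ← mul_assoc, aux_anticomm 𝒜 hgc hi hj hxi haj, neg_mul, mul_assoc]
          rw [h1]
          exact Submodule.neg_mem _
            (hamul _ (ih (fun y hy => hmem y (List.mem_cons_of_mem a hy)) x hxK t htK))
  set P : Set A := {z | ∃ m : List A, m.Sublist L ∧ z = m.prod} with hP
  set M : Submodule B' A := Submodule.span B' P with hM
  have h1M : (1 : A) ∈ M := Submodule.subset_span ⟨[], List.nil_sublist L, rfl⟩
  have hxmul : ∀ x ∈ O, ∀ u ∈ M, x * u ∈ M := by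
    intro x hx u hu
    induction hu using Submodule.span_induction with
    | mem z hz =>
      obtain ⟨m, hm, rfl⟩ := hz
      exact hcore L hLO x (hOL x hx) m hm
    | zero => rw [mul_zero]; exact Submodule.zero_mem _
    | add u v _ _ hu hv => rw [mul_add]; exact Submodule.add_mem _ hu hv
    | smul c u _ hu =>
      have : x * (c • u) = c • (x * u) := by
        rw [hsmul, hsmul, ← mul_assoc, ← hB'central (c : A) c.2 x, mul_assoc]
      rw [this]; exact Submodule.smul_mem _ _ hu
  have hlist : ∀ l : List A, (∀ y ∈ l, y ∈ O) → l.prod ∈ M := by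
    intro l
    induction l with
    | nil => intro _; exact h1M
    | cons x t ih =>
      intro hmem
      rw [List.prod_cons]
      exact hxmul x (hmem x List.mem_cons_self) _
        (ih fun y hy => hmem y (List.mem_cons_of_mem x hy))
  have hB'M : ∀ b : A, b ∈ B' → b ∈ M := by
    intro b hb
    have : b = (⟨b, hb⟩ : B') • (1 : A) := by rw [hsmul, mul_one]
    rw [this]; exact Submodule.smul_mem _ _ h1M
  have hPmulM : ∀ u ∈ M, ∀ q, (∃ m : List A, m.Sublist L ∧ q = m.prod) → u * q ∈ M := by
    intro u hu q hq
    obtain ⟨m, hm, rfl⟩ := hq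
    induction hu using Submodule.span_induction with
    | mem z hz =>
      obtain ⟨m', hm', rfl⟩ := hz
      rw [← List.prod_append]
      refine hlist _ fun y hy => ?_
      rcases List.mem_append.mp hy with h | h
      · exact hLO y (hm'.subset h)
      · exact hLO y (hm.subset h)
    | zero => rw [zero_mul]; exact Submodule.zero_mem _
    | add u v _ _ hu hv => rw [add_mul]; exact Submodule.add_mem _ hu hv
    | smul c u _ hu =>
      have : (c • u) * m.prod = c • (u * m.prod) := by rw [hsmul, hsmul, mul_assoc]
      rw [this]; exact Submodule.smul_mem _ _ hu
  have hmulM : ∀ u ∈ M, ∀ v ∈ M, u * v ∈ M := by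
    intro u hu v hv
    induction hv using Submodule.span_induction with
    | mem z hz => exact hPmulM u hu z hz
    | zero => rw [mul_zero]; exact Submodule.zero_mem _
    | add p q _ _ hp hq => rw [mul_add]; exact Submodule.add_mem _ hp hq
    | smul c p _ hp =>
      have : u * (c • p) = c • (u * p) := by
        rw [hsmul, hsmul, ← mul_assoc, ← hB'central (c : A) c.2 u, mul_assoc]
      rw [this]; exact Submodule.smul_mem _ _ hp
  have htop : M = ⊤ := by
    rw [eq_top_iff]
    intro b hb'
    clear hb'
    have hb : b ∈ Subring.closure ((𝒜 0 : Set A) ∪ (s : Set A)) := hs ▸ Subring.mem_top b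
    induction hb using Subring.closure_induction with
    | mem x hx =>
      rcases hx with hx | hx
      · exact hB'M x (B'.algebraMap_mem ⟨x, hx⟩)
      · -- decompose into homogeneous components
        rw [← DirectSum.sum_support_decompose 𝒜 x]
        refine Submodule.sum_mem _ fun i hi => ?_
        have hcomp : ((decompose 𝒜 x i : A), i) ∈ comps := by
          simp only [hcomps, Finset.mem_biUnion]
          exact ⟨x, hx, Finset.mem_image_of_mem _ hi⟩
        by_cases he : Even i
        · refine hB'M _ (Algebra.subset_adjoin ?_)
          have hf : ((decompose 𝒜 x i : A), i) ∈ comps.filter (fun p => Even p.2) :=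
            Finset.mem_filter.mpr ⟨hcomp, he⟩
          exact Finset.mem_coe.mpr (Finset.mem_union_left _ (Finset.mem_image_of_mem Prod.fst hf))
        · have hf : ((decompose 𝒜 x i : A), i) ∈ comps.filter (fun p => ¬ Even p.2) :=
            Finset.mem_filter.mpr ⟨hcomp, he⟩
          have hOmem : (decompose 𝒜 x i : A) ∈ O := by
            simp only [hO]
            exact Finset.mem_image_of_mem Prod.fst hf
          exact Submodule.subset_span ⟨[(decompose 𝒜 x i : A)],
            (List.singleton_sublist).mpr (hOL _ hOmem), (List.prod_singleton).symm⟩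
    | zero => exact Submodule.zero_mem _
    | one => exact h1M
    | add u v _ _ hu hv => exact Submodule.add_mem _ hu hv
    | neg u _ hu => exact Submodule.neg_mem _ hu
    | mul u v _ _ hu hv => exact hmulM u hu v hv
  have hfgtop : (⊤ : Submodule B' A).FG := by
    refine ⟨(L.sublists.map List.prod).toFinset, ?_⟩
    rw [← htop, hM]
    congr 1
    ext z
    simp only [List.coe_toFinset, List.mem_map, List.mem_sublists, Set.mem_setOf_eq, hP]
    constructor
    · rintro ⟨m, hm, rfl⟩; exact ⟨m, hm, rfl⟩
    · rintro ⟨m, hm, rfl⟩; exact ⟨m, hm, rfl⟩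
  haveI : Module.Finite B' A := Module.finite_def.mpr hfgtop
  haveI : IsNoetherian B' A := isNoetherian_of_isNoetherianRing_of_finite B' A
  exact isNoetherianRing_iff.mpr (isNoetherian_of_tower B' this)

end Aux

/-- Let `A = ⊕_{i ≥ 0} A_i` be a graded-commutative algebra
(`a * b = (-1)^{|a||b|} b * a` for homogeneous elements) whose degree-zero part
`A_0` is a commutative noetherian ring.  Then `A` is noetherian if and only if
`A` is finitely generated as an algebra over `A_0` (i.e. `A` is `A_0`-affine). -/
theorem graded_commutative_noetherian_iff_affine
    {A : Type*} [Ring A] (𝒜 : ℕ → AddSubgroup A) [GradedRing 𝒜]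
    (hgc : ∀ (i j : ℕ), ∀ a ∈ 𝒜 i, ∀ b ∈ 𝒜 j, a * b = (-1 : A) ^ (i * j) * (b * a))
    (h0comm : ∀ a b : 𝒜 0, a * b = b * a)
    (h0noeth : IsNoetherianRing (𝒜 0)) :
    IsNoetherianRing A ↔
      ∃ s : Finset A, Subring.closure ((𝒜 0 : Set A) ∪ (s : Set A)) = ⊤ := by
  exact ⟨aux_forward 𝒜, aux_backward 𝒜 hgc h0comm h0noeth⟩
end

section
/- Let C be a suspended monoidal category with unit object e and suspension T. Then the graded ring E(e) = ⊕_{i∈ℤ} Hom_C(e, T^i e), with product f·g = T^q f ∘ g for f : e → T^p e and g : e → T^q e, is graded-commutative: f·g = (-1)^{pq} g·f. -/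
open CategoryTheory MonoidalCategory

universe v u

/-- A *suspended monoidal category*: a (preadditive) monoidal category equipped
with a shift (suspension) `T = ⟦·⟧` by `ℤ`, together with natural isomorphisms
`λ_{p} : X ⊗ T^p Y ≅ T^p (X ⊗ Y)` and `ρ_p : T^p X ⊗ Y ≅ T^p (X ⊗ Y)`
compatible with the unitors, such that the square comparing
`T^q ρ_p ∘ λ_q` and `T^p λ_q ∘ ρ_p` on `T^p X ⊗ T^q Y` commutes up to the
sign `(-1)^{pq}`. -/
structure SuspendedMonoidalCategory (C : Type u) [Category.{v} C] [Preadditive C]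
    [MonoidalCategory C] [HasShift C ℤ] where
  lam : ∀ (q : ℤ) (X Y : C), X ⊗ (Y⟦q⟧) ≅ (X ⊗ Y)⟦q⟧
  rho : ∀ (p : ℤ) (X Y : C), (X⟦p⟧) ⊗ Y ≅ (X ⊗ Y)⟦p⟧
  lam_naturality : ∀ (q : ℤ) {X Y X' Y' : C} (f : X ⟶ X') (g : Y ⟶ Y'),
    (f ⊗ₘ (g⟦q⟧')) ≫ (lam q X' Y').hom = (lam q X Y).hom ≫ ((f ⊗ₘ g)⟦q⟧')
  rho_naturality : ∀ (p : ℤ) {X Y X' Y' : C} (f : X ⟶ X') (g : Y ⟶ Y'),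
    ((f⟦p⟧') ⊗ₘ g) ≫ (rho p X' Y').hom = (rho p X Y).hom ≫ ((f ⊗ₘ g)⟦p⟧')
  lam_unit : ∀ (q : ℤ) (X : C),
    (lam q (𝟙_ C) X).hom ≫ ((λ_ X).hom⟦q⟧') = (λ_ (X⟦q⟧)).hom
  rho_unit : ∀ (p : ℤ) (X : C),
    (rho p X (𝟙_ C)).hom ≫ ((ρ_ X).hom⟦p⟧') = (ρ_ (X⟦p⟧)).hom
  anticomm : ∀ (p q : ℤ) (X Y : C),
    (rho p X (Y⟦q⟧)).hom ≫ ((lam q X Y).hom⟦p⟧') ≫ (shiftFunctorComm C q p).hom.app (X ⊗ Y)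
      = ((p * q).negOnePow : ℤ) •
        ((lam q (X⟦p⟧) Y).hom ≫ ((rho p X Y).hom⟦q⟧'))

/-- The product on `E(e) = ⊕_{i ∈ ℤ} Hom_C(e, T^i e)`: for `f : e ⟶ T^p e` and
`g : e ⟶ T^q e`, the product `f · g = T^q f ∘ g : e ⟶ T^{p+q} e`. -/
noncomputable def emul {C : Type u} [Category.{v} C] [Preadditive C]
    [MonoidalCategory C] [HasShift C ℤ] {p q : ℤ}
    (f : (𝟙_ C) ⟶ (𝟙_ C)⟦p⟧) (g : (𝟙_ C) ⟶ (𝟙_ C)⟦q⟧) :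
    (𝟙_ C) ⟶ (𝟙_ C)⟦p + q⟧ :=
  g ≫ (f⟦q⟧') ≫ (shiftFunctorAdd C p q).inv.app (𝟙_ C)

variable {C : Type u} [Category.{v} C] [Preadditive C] [MonoidalCategory C] [HasShift C ℤ]

lemma aux1 (S : SuspendedMonoidalCategory C) {p q : ℤ}
    (f : (𝟙_ C) ⟶ (𝟙_ C)⟦p⟧) (g : (𝟙_ C) ⟶ (𝟙_ C)⟦q⟧) :
    (f ⊗ₘ g) ≫ (S.lam q ((𝟙_ C)⟦p⟧) (𝟙_ C)).hom ≫ ((S.rho p (𝟙_ C) (𝟙_ C)).hom⟦q⟧')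
        ≫ (((λ_ (𝟙_ C)).hom⟦p⟧')⟦q⟧')
      = (λ_ (𝟙_ C)).hom ≫ g ≫ (f⟦q⟧') := by
  have d : f ⊗ₘ g = (𝟙 (𝟙_ C) ⊗ₘ g) ≫ (f ⊗ₘ ((𝟙 (𝟙_ C))⟦q⟧')) := by
    rw [CategoryTheory.Functor.map_id, tensorHom_comp_tensorHom, Category.id_comp, Category.comp_id]
  have inner : ((f ⊗ₘ 𝟙 (𝟙_ C)) ≫ (S.rho p (𝟙_ C) (𝟙_ C)).hom) ≫ ((λ_ (𝟙_ C)).hom⟦p⟧')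
      = (λ_ (𝟙_ C)).hom ≫ f := by
    rw [Category.assoc, unitors_equal, S.rho_unit, tensorHom_id, rightUnitor_naturality]
  rw [d, Category.assoc, reassoc_of% (S.lam_naturality q f (𝟙 (𝟙_ C))),
    ← CategoryTheory.Functor.map_comp_assoc, ← CategoryTheory.Functor.map_comp, inner,
    CategoryTheory.Functor.map_comp, reassoc_of% (S.lam_unit q (𝟙_ C)),
    id_tensorHom, leftUnitor_naturality_assoc]

lemma aux2 (S : SuspendedMonoidalCategory C) {p q : ℤ}
    (f : (𝟙_ C) ⟶ (𝟙_ C)⟦p⟧) (g : (𝟙_ C) ⟶ (𝟙_ C)⟦q⟧) :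
    (f ⊗ₘ g) ≫ (S.rho p (𝟙_ C) ((𝟙_ C)⟦q⟧)).hom ≫ ((S.lam q (𝟙_ C) (𝟙_ C)).hom⟦p⟧')
        ≫ (((λ_ (𝟙_ C)).hom⟦q⟧')⟦p⟧')
      = (λ_ (𝟙_ C)).hom ≫ f ≫ (g⟦p⟧') := by
  have d : f ⊗ₘ g = (f ⊗ₘ 𝟙 (𝟙_ C)) ≫ (((𝟙 (𝟙_ C))⟦p⟧') ⊗ₘ g) := by
    rw [CategoryTheory.Functor.map_id, tensorHom_comp_tensorHom, Category.id_comp, Category.comp_id]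
  have inner : ((𝟙 (𝟙_ C) ⊗ₘ g) ≫ (S.lam q (𝟙_ C) (𝟙_ C)).hom) ≫ ((λ_ (𝟙_ C)).hom⟦q⟧')
      = (λ_ (𝟙_ C)).hom ≫ g := by
    rw [Category.assoc, S.lam_unit, id_tensorHom, leftUnitor_naturality]
  rw [d, Category.assoc, reassoc_of% (S.rho_naturality p (𝟙 (𝟙_ C)) g),
    ← CategoryTheory.Functor.map_comp_assoc, ← CategoryTheory.Functor.map_comp, inner,
    CategoryTheory.Functor.map_comp]
  rw [unitors_equal, reassoc_of% (S.rho_unit p (𝟙_ C)), tensorHom_id,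
    rightUnitor_naturality_assoc]

lemma keylem (S : SuspendedMonoidalCategory C) {p q : ℤ}
    (f : (𝟙_ C) ⟶ (𝟙_ C)⟦p⟧) (g : (𝟙_ C) ⟶ (𝟙_ C)⟦q⟧) :
    f ≫ (g⟦p⟧') ≫ (shiftFunctorComm C q p).hom.app (𝟙_ C)
      = ((p * q).negOnePow : ℤ) • (g ≫ (f⟦q⟧')) := by
  have nat : (((λ_ (𝟙_ C)).hom⟦q⟧')⟦p⟧') ≫ (shiftFunctorComm C q p).hom.app (𝟙_ C)
      = (shiftFunctorComm C q p).hom.app ((𝟙_ C) ⊗ (𝟙_ C)) ≫ (((λ_ (𝟙_ C)).hom⟦p⟧')⟦q⟧') :=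
    (shiftFunctorComm C q p).hom.naturality (λ_ (𝟙_ C)).hom
  rw [← cancel_epi (λ_ (𝟙_ C)).hom, Preadditive.comp_zsmul, ← aux1 S f g,
    ← reassoc_of% (aux2 S f g), nat,
    reassoc_of% (S.anticomm p q (𝟙_ C) (𝟙_ C))]
  simp only [Preadditive.zsmul_comp, Preadditive.comp_zsmul, Category.assoc]

theorem suspended_monoidal_graded_comm'
    (S : SuspendedMonoidalCategory C)
    {p q : ℤ} (f : (𝟙_ C) ⟶ (𝟙_ C)⟦p⟧) (g : (𝟙_ C) ⟶ (𝟙_ C)⟦q⟧) :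
    g ≫ (f⟦q⟧') ≫ (shiftFunctorAdd C p q).inv.app (𝟙_ C)
      = ((p * q).negOnePow : ℤ) •
      ((f ≫ (g⟦p⟧') ≫ (shiftFunctorAdd C q p).inv.app (𝟙_ C)) ≫
        eqToHom (by rw [add_comm])) := by
  have eq2 : (shiftFunctorComm C q p).hom.app (𝟙_ C) ≫ (shiftFunctorAdd C p q).inv.app (𝟙_ C)
      = (shiftFunctorAdd C q p).inv.app (𝟙_ C) ≫ eqToHom (by rw [add_comm]) := by
    rw [shiftFunctorComm_eq C q p (q + p) rfl]
    simp [shiftFunctorAdd', shiftFunctorAdd'_eq_shiftFunctorAdd, eqToHom_map]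
  simp only [Category.assoc]
  rw [← eq2, reassoc_of% (keylem S f g), Preadditive.zsmul_comp, smul_smul,
    ← Units.val_mul, Int.units_mul_self, Units.val_one, one_smul]
  simp only [Category.assoc]

/-- In a suspended monoidal category `C` with unit object `e`
and suspension `T`, the graded ring `E(e) = ⊕_{i ∈ ℤ} Hom_C(e, T^i e)` with
product `f · g = T^q f ∘ g` is graded-commutative: `f · g = (-1)^{pq} g · f`. -/
theorem suspended_monoidal_graded_comm
    {C : Type u} [Category.{v} C] [Preadditive C] [MonoidalCategory C]
    [HasShift C ℤ] (S : SuspendedMonoidalCategory C)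
    {p q : ℤ} (f : (𝟙_ C) ⟶ (𝟙_ C)⟦p⟧) (g : (𝟙_ C) ⟶ (𝟙_ C)⟦q⟧) :
    emul f g = ((p * q).negOnePow : ℤ) •
      (emul g f ≫ eqToHom (by rw [add_comm])) := by
  unfold emul
  exact suspended_monoidal_graded_comm' S f g
end
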